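/- arXiv:2311.02068 — 4 statements merged into one kernel-verified Lean document; each statement's English description precedes it below -/
import Mathlib

section
/- Conversely, suppose Φ_x ∈ ℝ^{nT×nT} and Φ_u ∈ ℝ^{mT×nT} satisfy (I − ZA)Φ_x − ZB Φ_u = I with Z the block-downshift operator and A, B block-diagonal, and suppose Φ_x is invertible. Then the controller K := Φ_u Φ_x^{-1} satisfies Φ_x = (I − Z(A + BK))^{-1} and Φ_u = K Φ_x, so the pair (Φ_x, Φ_u) is achieved in closed loop by K. -/
open Matrix

/-- conversely, if `Φ_x, Φ_u` satisfy the achievability constraint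
`(I − ZA)Φ_x − ZB Φ_u = I` with `Φ_x` invertible, then the controller `K = Φ_u Φ_x⁻¹`
achieves them in closed loop: `Φ_x = (I − Z(A + BK))⁻¹` and `Φ_u = K Φ_x`. -/
theorem achievability_converse
    {T n m : ℕ}
    (Z A : Matrix (Fin T × Fin n) (Fin T × Fin n) ℝ)
    (B : Matrix (Fin T × Fin n) (Fin T × Fin m) ℝ)
    (Phix : Matrix (Fin T × Fin n) (Fin T × Fin n) ℝ)
    (Phiu : Matrix (Fin T × Fin m) (Fin T × Fin n) ℝ)
    (hZ : ∀ t s : Fin T, ∀ i j : Fin n,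
      Z (t, i) (s, j) = if (t : ℕ) = (s : ℕ) + 1 ∧ i = j then 1 else 0)
    (hA : ∀ t s : Fin T, t ≠ s → ∀ i j : Fin n, A (t, i) (s, j) = 0)
    (hB : ∀ t s : Fin T, t ≠ s → ∀ (i : Fin n) (j : Fin m), B (t, i) (s, j) = 0)
    (hach : (1 - Z * A) * Phix - Z * B * Phiu = 1)
    (hinv : IsUnit Phix) :
    Phix = (1 - Z * (A + B * (Phiu * Phix⁻¹)))⁻¹ ∧
    Phiu = (Phiu * Phix⁻¹) * Phix := by
  have hdet : IsUnit Phix.det := (Matrix.isUnit_iff_isUnit_det Phix).mp hinv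
  have hix : Phix⁻¹ * Phix = 1 := Matrix.nonsing_inv_mul Phix hdet
  have key : (1 - Z * (A + B * (Phiu * Phix⁻¹))) * Phix = 1 := by
    have h2 := hach
    simp only [sub_mul, one_mul, mul_add, add_mul, Matrix.mul_assoc, hix,
      Matrix.mul_one] at h2 ⊢
    rw [← sub_sub]
    exact h2
  constructor
  · exact (Matrix.inv_eq_right_inv key).symm
  · rw [Matrix.mul_assoc, hix, Matrix.mul_one]
end

section
/- Let Φ_x, Φ_u satisfy the achievability constraint (I − ZA)Φ_x − ZB Φ_u = I, set Γ := I − ZA (invertible since ZA is nilpotent) and G := (I − ZA)^{-1} ZB. Then Φ_x Γ = I + G (Φ_u Γ). Consequently, if Φ_u Γ ∈ Sparse(S) and G ∈ Sparse(Δ), then Φ_x Γ ∈ Sparse(Struct(I + Δ·S)). -/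
open Matrix

/-- if `(I − ZA)Φ_x − ZB Φ_u = I`, `Γ := I − ZA` and `G := Γ⁻¹ ZB`, then
`Φ_x Γ = I + G (Φ_u Γ)`; consequently, if `Φ_u Γ ∈ Sparse(S)` and `G ∈ Sparse(Δ)`
with `S, Δ` binary, then `Φ_x Γ ∈ Sparse(Struct(I + Δ·S))`, i.e. `(Φ_x Γ) i j = 0`
wherever `(I + Δ·S) i j = 0`. -/
theorem phix_gamma_identity_and_sparsity
    {T n m : ℕ}
    (Z A : Matrix (Fin T × Fin n) (Fin T × Fin n) ℝ)
    (B : Matrix (Fin T × Fin n) (Fin T × Fin m) ℝ)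
    (Phix : Matrix (Fin T × Fin n) (Fin T × Fin n) ℝ)
    (Phiu : Matrix (Fin T × Fin m) (Fin T × Fin n) ℝ)
    (hZ : ∀ t s : Fin T, ∀ i j : Fin n,
      Z (t, i) (s, j) = if (t : ℕ) = (s : ℕ) + 1 ∧ i = j then 1 else 0)
    (hA : ∀ t s : Fin T, t ≠ s → ∀ i j : Fin n, A (t, i) (s, j) = 0)
    (hach : (1 - Z * A) * Phix - Z * B * Phiu = 1) :
    Phix * (1 - Z * A) = 1 + ((1 - Z * A)⁻¹ * (Z * B)) * (Phiu * (1 - Z * A)) ∧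
    ∀ (S : Matrix (Fin T × Fin m) (Fin T × Fin n) ℝ)
      (Delta : Matrix (Fin T × Fin n) (Fin T × Fin m) ℝ),
      (∀ i j, S i j = 0 ∨ S i j = 1) →
      (∀ i j, Delta i j = 0 ∨ Delta i j = 1) →
      (∀ i j, S i j = 0 →
        (Phiu * (1 - Z * A) : Matrix (Fin T × Fin m) (Fin T × Fin n) ℝ) i j = 0) →
      (∀ i j, Delta i j = 0 →
        ((1 - Z * A)⁻¹ * (Z * B) : Matrix (Fin T × Fin n) (Fin T × Fin m) ℝ) i j = 0) →
      ∀ i j, ((1 : Matrix (Fin T × Fin n) (Fin T × Fin n) ℝ) + Delta * S) i j = 0 →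
        (Phix * (1 - Z * A) : Matrix (Fin T × Fin n) (Fin T × Fin n) ℝ) i j = 0 := by
  set M := Z * A with hM
  -- support of M
  have hsupp : ∀ x y : Fin T × Fin n, M x y ≠ 0 → (y.1 : ℕ) + 1 = (x.1 : ℕ) := by
    rintro ⟨t, i⟩ ⟨s, j⟩ h
    by_contra hne
    apply h
    rw [hM]
    simp only [Matrix.mul_apply]
    apply Finset.sum_eq_zero
    rintro ⟨u, k⟩ -
    rcases eq_or_ne u s with rfl | hus
    · rw [hZ t u i k]
      split_ifs with hc
      · exact absurd hc.1.symm hne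
      · ring
    · rw [hA u s hus k j]; ring
  have hpow : ∀ K : ℕ, ∀ x y : Fin T × Fin n, (M ^ K) x y ≠ 0 → (y.1 : ℕ) + K ≤ (x.1 : ℕ) := by
    intro K
    induction K with
    | zero =>
      intro x y h
      rw [pow_zero] at h
      rcases eq_or_ne x y with rfl | hxy
      · simp
      · exact absurd (Matrix.one_apply_ne hxy) h
    | succ k ih =>
      intro x y h
      rw [pow_succ, Matrix.mul_apply] at h
      obtain ⟨z, -, hz⟩ := Finset.exists_ne_zero_of_sum_ne_zero h
      have h1 := ih x z (left_ne_zero_of_mul hz)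
      have h2 := hsupp z y (right_ne_zero_of_mul hz)
      omega
  have hnil : IsNilpotent M := by
    refine ⟨T, ?_⟩
    ext x y
    simp only [Matrix.zero_apply]
    by_contra h
    have := hpow T x y h
    have := x.1.2
    omega
  have hu : IsUnit (1 - M) := hnil.isUnit_one_sub
  have hdet : IsUnit ((1 - M).det) := (Matrix.isUnit_iff_isUnit_det _).mp hu
  have hinv : (1 - M)⁻¹ * (1 - M) = 1 := Matrix.nonsing_inv_mul _ hdet
  have h1 : (1 - M) * Phix = 1 + Z * B * Phiu := sub_eq_iff_eq_add.mp hach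
  have hid : Phix * (1 - M) = 1 + ((1 - M)⁻¹ * (Z * B)) * (Phiu * (1 - M)) := by
    have h2 : Phix = (1 - M)⁻¹ * (1 + Z * B * Phiu) := by
      rw [← h1, ← mul_assoc, hinv, one_mul]
    rw [h2, mul_add, mul_one, add_mul, hinv,
      ← Matrix.mul_assoc ((1 - M)⁻¹) (Z * B) Phiu, Matrix.mul_assoc ((1 - M)⁻¹ * (Z * B)) Phiu (1 - M)]
  refine ⟨hid, ?_⟩
  intro S Delta hS hD hSp hDp i j h0
  have hterm : ∀ k, Delta i k * S k j = 0 := by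
    have hIz : (1 : Matrix (Fin T × Fin n) (Fin T × Fin n) ℝ) i j ≥ 0 := by
      rcases eq_or_ne i j with rfl | hij
      · simp
      · simp [Matrix.one_apply_ne hij]
    have hfnn : ∀ k ∈ Finset.univ, (0:ℝ) ≤ Delta i k * S k j := by
      intro k _
      apply mul_nonneg
      · rcases hD i k with h | h <;> simp [h]
      · rcases hS k j with h | h <;> simp [h]
    have hsum : ∑ k, Delta i k * S k j = 0 := by
      have h0' : (1 : Matrix (Fin T × Fin n) (Fin T × Fin n) ℝ) i j
          + ∑ k, Delta i k * S k j = 0 := by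
        simpa [Matrix.add_apply, Matrix.mul_apply] using h0
      have hsnn : (0:ℝ) ≤ ∑ k, Delta i k * S k j := Finset.sum_nonneg hfnn
      linarith
    intro k
    exact (Finset.sum_eq_zero_iff_of_nonneg hfnn).mp hsum k (Finset.mem_univ k)
  have hI0 : (1 : Matrix (Fin T × Fin n) (Fin T × Fin n) ℝ) i j = 0 := by
    have h0' : (1 : Matrix (Fin T × Fin n) (Fin T × Fin n) ℝ) i j
        + ∑ k, Delta i k * S k j = 0 := by
      simpa [Matrix.add_apply, Matrix.mul_apply] using h0
    rw [Finset.sum_congr rfl (fun k _ => hterm k)] at h0'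
    simpa using h0'
  rw [hid, Matrix.add_apply, hI0, Matrix.mul_apply, zero_add]
  apply Finset.sum_eq_zero
  intro k _
  rcases mul_eq_zero.mp (hterm k) with h | h
  · rw [hDp i k h, zero_mul]
  · rw [hSp k j h, mul_zero]
end

section
/- Sparsity Invariance (SI) implication for diagonal-padded patterns: let S ∈ {0,1}^{m×n}, and construct V ∈ {0,1}^{n×n} by Algorithm 1: initialize V = all-ones, and set V_{jk} = 0 whenever there exists a row i with S_{ik} = 0 and S_{ij} = 1. Then for any matrices Φ_u ∈ Sparse(S) ⊆ ℝ^{m×n} and Φ_x ∈ Sparse(V) ⊆ ℝ^{n×n} with Φ_x invertible, the product Φ_u Φ_x^{-1} lies in Sparse(S). -/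
open Matrix

/-- Sparsity Invariance: let `S` be a binary `m×n` pattern and let `V` be the
binary `n×n` pattern of Algorithm 1, i.e. `V j k = 0` iff `∃ i, S i j = 1 ∧ S i k = 0`.
Then for `Φ_u ∈ Sparse(S)` and invertible `Φ_x ∈ Sparse(V)`, `Φ_u Φ_x⁻¹ ∈ Sparse(S)`. -/
theorem sparsity_invariance
    {m n : ℕ} (S : Matrix (Fin m) (Fin n) ℝ) (V : Matrix (Fin n) (Fin n) ℝ)
    (hSbin : ∀ i j, S i j = 0 ∨ S i j = 1)
    (hVbin : ∀ j k, V j k = 0 ∨ V j k = 1)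
    (hV : ∀ j k, V j k = 0 ↔ ∃ i, S i j = 1 ∧ S i k = 0)
    (Phiu : Matrix (Fin m) (Fin n) ℝ) (Phix : Matrix (Fin n) (Fin n) ℝ)
    (hPhiu : ∀ i j, S i j = 0 → Phiu i j = 0)
    (hPhix : ∀ j k, V j k = 0 → Phix j k = 0)
    (hinv : IsUnit Phix) :
    ∀ i j, S i j = 0 → (Phiu * Phix⁻¹ : Matrix (Fin m) (Fin n) ℝ) i j = 0 := by
  intro i j hij
  classical
  -- the subspace of matrices vanishing at (k,l) whenever S i k = 1 and S i l = 0
  let T : Submodule ℝ (Matrix (Fin n) (Fin n) ℝ) :=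
    { carrier := {X | ∀ k l, S i k = 1 → S i l = 0 → X k l = 0}
      add_mem' := fun {a b} ha hb k l h1 h0 => by
        simp [Matrix.add_apply, ha k l h1 h0, hb k l h1 h0]
      zero_mem' := fun k l _ _ => rfl
      smul_mem' := fun c X hX k l h1 h0 => by
        simp [Matrix.smul_apply, hX k l h1 h0] }
  have hPhixT : ∀ X ∈ T, Phix * X ∈ T := by
    intro X hX k l h1 h0
    rw [Matrix.mul_apply]
    apply Finset.sum_eq_zero
    intro x _
    rcases hSbin i x with hx | hx
    · rw [hPhix k x ((hV k x).mpr ⟨i, h1, hx⟩), zero_mul]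
    · rw [hX x l hx h0, mul_zero]
  have honeT : (1 : Matrix (Fin n) (Fin n) ℝ) ∈ T := by
    intro k l h1 h0
    have hkl : k ≠ l := fun h => by rw [h, h0] at h1; norm_num at h1
    simp [Matrix.one_apply, hkl]
  let L : T →ₗ[ℝ] T :=
    { toFun := fun X => ⟨Phix * X.1, hPhixT X.1 X.2⟩
      map_add' := fun X Y => by ext k l; simp [Matrix.mul_add]
      map_smul' := fun c X => by ext k l; simp [Matrix.mul_smul] }
  have hLinj : Function.Injective L := by
    intro X Y hXY
    have h1 : Phix * X.1 = Phix * Y.1 := congrArg Subtype.val hXY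
    exact Subtype.ext (hinv.mul_left_cancel h1)
  have hLsurj : Function.Surjective L :=
    (LinearMap.injective_iff_surjective (f := L)).mp hLinj
  obtain ⟨B, hB⟩ := hLsurj ⟨1, honeT⟩
  have hBinv : Phix * B.1 = 1 := congrArg Subtype.val hB
  have hinvEq : Phix⁻¹ = B.1 := Matrix.inv_eq_right_inv hBinv
  rw [Matrix.mul_apply, hinvEq]
  apply Finset.sum_eq_zero
  intro k _
  rcases hSbin i k with hk | hk
  · rw [hPhiu i k hk, zero_mul]
  · rw [B.2 k j hk hij, mul_zero]
end

section
/- Counterexample to well-posedness via SI without QI: let Δ = I₃ (3×3 identity pattern), S the binary pattern with ones at positions (1,1),(2,1),(2,2),(3,3), and Ŝ the pattern with ones at (1,1),(2,1),(2,2),(3,2),(3,3). Then Ŝ is not quadratically invariant with respect to patterns in Sparse(Δ) (i.e., there exist K ∈ Sparse(Ŝ) and G ∈ Sparse(Δ) with KGK ∉ Sparse(Ŝ)), and the matrices V, V̂ produced by Algorithm 1 from S and Ŝ satisfy V ≰ V̂ entrywise. -/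
open Matrix
open scoped Classical

noncomputable def algV (S : Matrix (Fin 3) (Fin 3) ℝ) : Matrix (Fin 3) (Fin 3) ℝ :=
  Matrix.of fun j k => if ∃ i, S i j = 1 ∧ S i k = 0 then 0 else 1

/-- `K ∈ Sparse(P)`: `K` vanishes wherever the pattern `P` does. -/
def InSparse {m n R : Type*} [Zero R] (P K : Matrix m n R) : Prop :=
  ∀ i j, P i j = 0 → K i j = 0

theorem exists_not_inSparse_mul_mul_of_not_inSparse_mul_self {n R : Type*} [Fintype n]
    [DecidableEq n] [Semiring R] (P : Matrix n n R) (h : ¬ InSparse P (P * P)) :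
    ∃ K G : Matrix n n R, InSparse P K ∧ InSparse 1 G ∧ ¬ InSparse P (K * G * K) :=
  ⟨P, 1, fun _ _ => id, fun _ _ => id, by rwa [Matrix.mul_one]⟩

theorem algV_eq_zero {S : Matrix (Fin 3) (Fin 3) ℝ} {i j k : Fin 3} (hj : S i j = 1)
    (hk : S i k = 0) : algV S j k = 0 :=
  if_pos ⟨i, hj, hk⟩

theorem algV_eq_one {S : Matrix (Fin 3) (Fin 3) ℝ} {j k : Fin 3}
    (h : ∀ i, S i j = 1 → S i k ≠ 0) : algV S j k = 1 :=
  if_neg fun ⟨i, hj, hk⟩ => h i hj hk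

/-- counterexample to well-posedness via SI without QI: with
`Δ = I₃`, `S = [[1,0,0],[1,1,0],[0,0,1]]` and `Ŝ = [[1,0,0],[1,1,0],[0,1,1]]`:
(1) `Ŝ` is not QI w.r.t. patterns in `Sparse(Δ)`: there are `K ∈ Sparse(Ŝ)` and
`G ∈ Sparse(Δ)` with `KGK ∉ Sparse(Ŝ)`; and
(2) the Algorithm-1 patterns satisfy `V ≰ V̂`: `V` has a `1` where `V̂` has a `0`. -/
theorem si_without_qi_counterexample :
    (∃ K G : Matrix (Fin 3) (Fin 3) ℝ,
      (∀ i j, (!![1,0,0;1,1,0;0,1,1] : Matrix (Fin 3) (Fin 3) ℝ) i j = 0 → K i j = 0) ∧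
      (∀ i j, (1 : Matrix (Fin 3) (Fin 3) ℝ) i j = 0 → G i j = 0) ∧
      ¬ (∀ i j, (!![1,0,0;1,1,0;0,1,1] : Matrix (Fin 3) (Fin 3) ℝ) i j = 0 →
          (K * G * K : Matrix (Fin 3) (Fin 3) ℝ) i j = 0)) ∧
    (∃ j k, algV (!![1,0,0;1,1,0;0,0,1] : Matrix (Fin 3) (Fin 3) ℝ) j k = 1 ∧
      algV (!![1,0,0;1,1,0;0,1,1] : Matrix (Fin 3) (Fin 3) ℝ) j k = 0) := by
  refine ⟨exists_not_inSparse_mul_mul_of_not_inSparse_mul_self _ fun h => ?_, 1, 0, ?_, ?_⟩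
  · -- the path 2 → 1 → 0 in `Ŝ` is not closed by an edge 2 → 0
    have h20 := h 2 0 rfl
    simp [Matrix.mul_apply, Fin.sum_univ_three] at h20
  · -- column 1 of `S` is supported inside column 0
    refine algV_eq_one fun i => ?_
    fin_cases i <;> simp
  · exact algV_eq_zero (i := 2) (by simp) (by simp)
end
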